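/- Let u and ξ be smooth vector fields on ℝ^n, let F^k := u^i u^k_{|i}, and suppose (£_ξ F)^k = −F^k identically for all k. Then the following deviation equation holds pointwise: u^j (u^i ξ^k_{|i})_{|j} = R^k_{ijl} u^i u^j ξ^l + ξ^k_{|j} F^j − F^k + u^n (w^k)_{|n} − T^k_{jl} F^j ξ^l − u^n ((£_ξ u)^k)_{|n} − u^k_{|i} (£_ξ u)^i, where w is the vector field w^k := T^k_{jl} u^j ξ^l. -/

import Mathlib

open scoped BigOperators

noncomputable section

/-- Partial derivative `∂_j f` of a scalar function on `ℝ^n`. -/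
def pd {n : ℕ} (j : Fin n) (f : (Fin n → ℝ) → ℝ) (x : Fin n → ℝ) : ℝ :=
  fderiv ℝ f x (Pi.single j 1)

/-- Covariant derivative of a vector field: `ξ^k_{|j} = ∂_j ξ^k + Γ^k_{mj} ξ^m`. -/
def covV {n : ℕ} (Γ : Fin n → Fin n → Fin n → (Fin n → ℝ) → ℝ)
    (ξ : Fin n → (Fin n → ℝ) → ℝ) (k j : Fin n) (x : Fin n → ℝ) : ℝ :=
  pd j (ξ k) x + ∑ m, Γ k m j x * ξ m x

/-- Covariant derivative of a (1,1)-tensor field: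
`A^k_{i|j} = ∂_j A^k_i + Γ^k_{mj} A^m_i − Γ^m_{ij} A^k_m`. -/
def covT {n : ℕ} (Γ : Fin n → Fin n → Fin n → (Fin n → ℝ) → ℝ)
    (A : Fin n → Fin n → (Fin n → ℝ) → ℝ) (k i j : Fin n) (x : Fin n → ℝ) : ℝ :=
  pd j (A k i) x + ∑ m, Γ k m j x * A m i x - ∑ m, Γ m i j x * A k m x

/-- Curvature tensor
`R^k_{ijl} = ∂_j Γ^k_{il} − ∂_l Γ^k_{ij} + Γ^n_{il} Γ^k_{nj} − Γ^n_{ij} Γ^k_{nl}`. -/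
def curv {n : ℕ} (Γ : Fin n → Fin n → Fin n → (Fin n → ℝ) → ℝ)
    (k i j l : Fin n) (x : Fin n → ℝ) : ℝ :=
  pd j (Γ k i l) x - pd l (Γ k i j) x
    + ∑ m, Γ m i l x * Γ k m j x - ∑ m, Γ m i j x * Γ k m l x

/-- Torsion tensor `T^k_{ij} = Γ^k_{ji} − Γ^k_{ij}`. -/
def tor {n : ℕ} (Γ : Fin n → Fin n → Fin n → (Fin n → ℝ) → ℝ)
    (k i j : Fin n) (x : Fin n → ℝ) : ℝ :=
  Γ k j i x - Γ k i j x

/-- Lie derivative of a vector field: `(£_ξ u)^k = ξ^j ∂_j u^k − u^j ∂_j ξ^k`. -/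
def lieV {n : ℕ} (ξ u : Fin n → (Fin n → ℝ) → ℝ) (k : Fin n) (x : Fin n → ℝ) : ℝ :=
  ∑ j, ξ j x * pd j (u k) x - ∑ j, u j x * pd j (ξ k) x

/-- Lie derivative of a (1,1)-tensor field:
`(£_ξ A)^k_i = ξ^m ∂_m A^k_i − A^m_i ∂_m ξ^k + A^k_m ∂_i ξ^m`. -/
def lieT {n : ℕ} (ξ : Fin n → (Fin n → ℝ) → ℝ)
    (A : Fin n → Fin n → (Fin n → ℝ) → ℝ) (k i : Fin n) (x : Fin n → ℝ) : ℝ :=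
  ∑ m, ξ m x * pd m (A k i) x - ∑ m, A m i x * pd m (ξ k) x
    + ∑ m, A k m x * pd i (ξ m) x

/-- Lie derivative of the connection coefficients:
`£_ξ Γ^k_{ij} = ∂_j ∂_i ξ^k + ξ^m ∂_m Γ^k_{ij} − Γ^m_{ij} ∂_m ξ^k
  + Γ^k_{mj} ∂_i ξ^m + Γ^k_{im} ∂_j ξ^m`. -/
def lieC {n : ℕ} (ξ : Fin n → (Fin n → ℝ) → ℝ)
    (Γ : Fin n → Fin n → Fin n → (Fin n → ℝ) → ℝ)
    (k i j : Fin n) (x : Fin n → ℝ) : ℝ :=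
  pd j (fun y => pd i (ξ k) y) x + ∑ m, ξ m x * pd m (Γ k i j) x
    - ∑ m, Γ m i j x * pd m (ξ k) x + ∑ m, Γ k m j x * pd i (ξ m) x
    + ∑ m, Γ k i m x * pd j (ξ m) x



-- smooth abbreviation
abbrev Sm {n : ℕ} (f : (Fin n → ℝ) → ℝ) : Prop := ContDiff ℝ (⊤ : ℕ∞) f

lemma Sm.dAt {n : ℕ} {f : (Fin n → ℝ) → ℝ} (hf : Sm f) (x : Fin n → ℝ) :
    DifferentiableAt ℝ f x :=
  (hf.differentiable (by simp)).differentiableAt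

lemma sm_pd {n : ℕ} {f : (Fin n → ℝ) → ℝ} (hf : Sm f) (j : Fin n) : Sm (pd j f) := by
  unfold pd
  exact (hf.fderiv_right (m := (⊤:ℕ∞)) (by norm_cast)).clm_apply contDiff_const

lemma pd_add {n : ℕ} {f g : (Fin n → ℝ) → ℝ} (hf : Sm f) (hg : Sm g) (j : Fin n)
    (x : Fin n → ℝ) : pd j (fun y => f y + g y) x = pd j f x + pd j g x := by
  unfold pd
  rw [fderiv_fun_add (hf.dAt x) (hg.dAt x)]
  rfl

lemma pd_mul {n : ℕ} {f g : (Fin n → ℝ) → ℝ} (hf : Sm f) (hg : Sm g) (j : Fin n)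
    (x : Fin n → ℝ) : pd j (fun y => f y * g y) x = pd j f x * g x + f x * pd j g x := by
  unfold pd
  rw [fderiv_fun_mul (hf.dAt x) (hg.dAt x)]
  simp
  ring

lemma pd_sum {n : ℕ} {ι : Type*} [Fintype ι] {f : ι → (Fin n → ℝ) → ℝ}
    (hf : ∀ i, Sm (f i)) (j : Fin n) (x : Fin n → ℝ) :
    pd j (fun y => ∑ i, f i y) x = ∑ i, pd j (f i) x := by
  unfold pd
  rw [fderiv_fun_sum fun i _ => (hf i).dAt x]
  simp

lemma pd_comm {n : ℕ} {f : (Fin n → ℝ) → ℝ} (hf : Sm f) (i j : Fin n) (x : Fin n → ℝ) :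
    pd j (fun y => pd i f y) x = pd i (fun y => pd j f y) x := by
  have hs : IsSymmSndFDerivAt ℝ f x :=
    (hf.contDiffAt).isSymmSndFDerivAt (by rw [minSmoothness_of_isRCLikeNormedField]; exact ENat.natCast_le_of_coe_top_le_withTop le_rfl 2)
  have h : ∀ (a b : Fin n), pd a (fun y => pd b f y) x
      = fderiv ℝ (fderiv ℝ f) x (Pi.single a 1) (Pi.single b 1) := by
    intro a b
    unfold pd
    rw [fderiv_clm_apply ((hf.fderiv_right (m := (⊤:ℕ∞)) (by norm_cast)).differentiable (by simp)).differentiableAt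
      (differentiableAt_const _)]
    simp
  rw [h, h, hs]

lemma pd_sub {n : ℕ} {f g : (Fin n → ℝ) → ℝ} (hf : Sm f) (hg : Sm g) (j : Fin n)
    (x : Fin n → ℝ) : pd j (fun y => f y - g y) x = pd j f x - pd j g x := by
  unfold pd
  rw [fderiv_fun_sub (hf.dAt x) (hg.dAt x)]
  rfl

lemma sm_mul {n : ℕ} {f g : (Fin n → ℝ) → ℝ} (hf : Sm f) (hg : Sm g) :
    Sm (fun y => f y * g y) := hf.mul hg

lemma sm_sum {n : ℕ} {ι : Type*} [Fintype ι] {f : ι → (Fin n → ℝ) → ℝ}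
    (hf : ∀ i, Sm (f i)) : Sm (fun y => ∑ i, f i y) :=
  ContDiff.sum fun i _ => hf i

lemma sm_covV {n : ℕ} {Γ : Fin n → Fin n → Fin n → (Fin n → ℝ) → ℝ}
    {ξ : Fin n → (Fin n → ℝ) → ℝ} (hΓ : ∀ k i j, Sm (Γ k i j))
    (hξ : ∀ k, Sm (ξ k)) (k j : Fin n) : Sm (covV Γ ξ k j) := by
  unfold covV
  exact (sm_pd (hξ k) j).add (sm_sum fun m => (hΓ k m j).mul (hξ m))

lemma sm_tor {n : ℕ} {Γ : Fin n → Fin n → Fin n → (Fin n → ℝ) → ℝ}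
    (hΓ : ∀ k i j, Sm (Γ k i j)) (k i j : Fin n) : Sm (tor Γ k i j) := by
  unfold tor
  exact (hΓ k j i).sub (hΓ k i j)

lemma sm_lieV {n : ℕ} {ξ u : Fin n → (Fin n → ℝ) → ℝ} (hξ : ∀ k, Sm (ξ k))
    (hu : ∀ k, Sm (u k)) (k : Fin n) : Sm (lieV ξ u k) := by
  unfold lieV
  exact (sm_sum fun j => (hξ j).mul (sm_pd (hu k) j)).sub
    (sm_sum fun j => (hu j).mul (sm_pd (hξ k) j))

lemma covV_contract {n : ℕ} {Γ : Fin n → Fin n → Fin n → (Fin n → ℝ) → ℝ}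
    {u : Fin n → (Fin n → ℝ) → ℝ} {A : Fin n → Fin n → (Fin n → ℝ) → ℝ}
    (hΓ : ∀ k i j, Sm (Γ k i j)) (hu : ∀ k, Sm (u k)) (hA : ∀ k i, Sm (A k i))
    (k j : Fin n) (x : Fin n → ℝ) :
    covV Γ (fun k y => ∑ i, u i y * A k i y) k j x
      = ∑ i, covV Γ u i j x * A k i x + ∑ i, u i x * covT Γ A k i j x := by
  unfold covV covT
  rw [pd_sum (fun i => (hu i).mul (hA k i))]
  have hmul : ∀ i, pd j (fun y => u i y * A k i y) x
      = pd j (u i) x * A k i x + u i x * pd j (A k i) x :=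
    fun i => pd_mul (hu i) (hA k i) j x
  simp only [hmul]
  have h1 : ∑ m, Γ k m j x * ∑ i, u i x * A m i x
      = ∑ i, u i x * ∑ m, Γ k m j x * A m i x := by
    simp_rw [Finset.mul_sum]
    rw [Finset.sum_comm]
    exact Finset.sum_congr rfl fun i _ => Finset.sum_congr rfl fun m _ => by ring
  have h2 : ∑ i, (∑ m, Γ i m j x * u m x) * A k i x
      = ∑ i, u i x * ∑ m, Γ m i j x * A k m x := by
    simp_rw [Finset.sum_mul, Finset.mul_sum]
    rw [Finset.sum_comm]
    exact Finset.sum_congr rfl fun i _ => Finset.sum_congr rfl fun m _ => by ring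
  simp only [Finset.sum_add_distrib, add_mul, mul_add, mul_sub]
  rw [h1] at *
  simp only [Finset.sum_sub_distrib]
  rw [← h2]
  simp only [Finset.sum_add_distrib]
  ring

lemma covT_covV_xi {n : ℕ} {Γ : Fin n → Fin n → Fin n → (Fin n → ℝ) → ℝ}
    {ξ : Fin n → (Fin n → ℝ) → ℝ}
    (hΓ : ∀ k i j, Sm (Γ k i j)) (hξ : ∀ k, Sm (ξ k))
    (k i j : Fin n) (x : Fin n → ℝ) :
    covT Γ (fun k i y => covV Γ ξ k i y) k i j x
      = lieC ξ Γ k i j x + ∑ l, curv Γ k i j l x * ξ l x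
        + covT Γ (fun k i y => ∑ l, tor Γ k i l y * ξ l y) k i j x := by
  unfold covT covV curv lieC
  rw [pd_add (sm_pd (hξ k) i) (sm_sum fun m => (hΓ k m i).mul (hξ m)),
    pd_sum (fun m => (hΓ k m i).mul (hξ m)),
    pd_sum (fun l => (sm_tor hΓ k i l).mul (hξ l))]
  have hm1 : ∀ m, pd j (fun y => Γ k m i y * ξ m y) x
      = pd j (Γ k m i) x * ξ m x + Γ k m i x * pd j (ξ m) x :=
    fun m => pd_mul (hΓ k m i) (hξ m) j x
  have hm2 : ∀ l, pd j (fun y => tor Γ k i l y * ξ l y) x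
      = (pd j (Γ k l i) x - pd j (Γ k i l) x) * ξ l x + (Γ k l i x - Γ k i l x) * pd j (ξ l) x := by
    intro l
    rw [pd_mul (sm_tor hΓ k i l) (hξ l) j x]
    unfold tor
    rw [pd_sub (hΓ k l i) (hΓ k i l)]
  simp only [hm1, hm2]
  unfold tor
  simp only [sub_mul, mul_sub, add_mul, mul_add, Finset.sum_sub_distrib, Finset.sum_add_distrib,
    Finset.sum_mul, Finset.mul_sum]
  have h3 : ∑ m, ξ m x * pd m (Γ k i j) x = ∑ m, pd m (Γ k i j) x * ξ m x :=
    Finset.sum_congr rfl fun m _ => by ring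
  have hq1 : ∑ a, ∑ b, Γ b i a x * Γ k b j x * ξ a x
      = ∑ a, ∑ b, Γ k a j x * Γ a i b x * ξ b x := by
    rw [Finset.sum_comm]
    exact Finset.sum_congr rfl fun a _ => Finset.sum_congr rfl fun b _ => by ring
  have hq2 : ∑ a, ∑ b, Γ b i j x * Γ k b a x * ξ a x
      = ∑ a, ∑ b, Γ a i j x * Γ k a b x * ξ b x := by
    rw [Finset.sum_comm]
  have hA : ∑ a, ∑ b, Γ k a j x * Γ a i b x * ξ b x
      = ∑ a, ∑ b, Γ k a j x * (Γ a i b x * ξ b x) :=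
    Finset.sum_congr rfl fun a _ => Finset.sum_congr rfl fun b _ => by ring
  have hB : ∑ a, ∑ b, Γ a i j x * Γ k a b x * ξ b x
      = ∑ a, ∑ b, Γ a i j x * (Γ k a b x * ξ b x) :=
    Finset.sum_congr rfl fun a _ => Finset.sum_congr rfl fun b _ => by ring
  rw [h3, hq1, hq2, hA, hB]
  ring

lemma lieT_covV {n : ℕ} {Γ : Fin n → Fin n → Fin n → (Fin n → ℝ) → ℝ}
    {ξ u : Fin n → (Fin n → ℝ) → ℝ}
    (hΓ : ∀ k i j, Sm (Γ k i j)) (hξ : ∀ k, Sm (ξ k)) (hu : ∀ k, Sm (u k))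
    (k i : Fin n) (x : Fin n → ℝ) :
    lieT ξ (fun k i y => covV Γ u k i y) k i x
      = covV Γ (lieV ξ u) k i x + ∑ m, u m x * lieC ξ Γ k m i x := by
  unfold lieT covV lieV lieC
  have hpdcov : ∀ m, pd m (fun y => pd i (u k) y + ∑ l, Γ k l i y * u l y) x
      = pd m (fun y => pd i (u k) y) x
        + ∑ l, (pd m (Γ k l i) x * u l x + Γ k l i x * pd m (u l) x) := by
    intro m
    rw [pd_add (sm_pd (hu k) i) (sm_sum fun l => (hΓ k l i).mul (hu l)),
      pd_sum (fun l => (hΓ k l i).mul (hu l))]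
    congr 1
    exact Finset.sum_congr rfl fun l _ => pd_mul (hΓ k l i) (hu l) m x
  simp only [hpdcov]
  have hpdlie : pd i (fun y => ∑ j, ξ j y * pd j (u k) y - ∑ j, u j y * pd j (ξ k) y) x
      = ∑ j, (pd i (ξ j) x * pd j (u k) x + ξ j x * pd i (fun y => pd j (u k) y) x)
        - ∑ j, (pd i (u j) x * pd j (ξ k) x + u j x * pd i (fun y => pd j (ξ k) y) x) := by
    rw [pd_sub (sm_sum fun j => (hξ j).mul (sm_pd (hu k) j))
      (sm_sum fun j => (hu j).mul (sm_pd (hξ k) j)),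
      pd_sum (fun j => (hξ j).mul (sm_pd (hu k) j)),
      pd_sum (fun j => (hu j).mul (sm_pd (hξ k) j))]
    congr 1
    · exact Finset.sum_congr rfl fun j _ => pd_mul (hξ j) (sm_pd (hu k) j) i x
    · exact Finset.sum_congr rfl fun j _ => pd_mul (hu j) (sm_pd (hξ k) j) i x
  simp only [hpdlie]
  have hcomm : ∀ m, pd m (fun y => pd i (u k) y) x = pd i (fun y => pd m (u k) y) x :=
    fun m => pd_comm (hu k) i m x
  simp only [hcomm]
  simp only [sub_mul, mul_sub, add_mul, mul_add, Finset.sum_sub_distrib, Finset.sum_add_distrib,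
    Finset.sum_mul, Finset.mul_sum]
  have h1 : ∑ a, pd a (u k) x * pd i (ξ a) x = ∑ a, pd i (ξ a) x * pd a (u k) x :=
    Finset.sum_congr rfl fun a _ => by ring
  have h2 : ∑ a, ∑ b, ξ a x * (Γ k b i x * pd a (u b) x)
      = ∑ a, ∑ b, Γ k a i x * (ξ b x * pd b (u a) x) := by
    rw [Finset.sum_comm]
    exact Finset.sum_congr rfl fun a _ => Finset.sum_congr rfl fun b _ => by ring
  have h3 : ∑ a, ∑ b, ξ a x * (pd a (Γ k b i) x * u b x)
      = ∑ a, ∑ b, u a x * (ξ b x * pd b (Γ k a i) x) := by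
    rw [Finset.sum_comm]
    exact Finset.sum_congr rfl fun a _ => Finset.sum_congr rfl fun b _ => by ring
  have h4 : ∑ a, ∑ b, Γ a b i x * u b x * pd a (ξ k) x
      = ∑ a, ∑ b, u a x * (Γ b a i x * pd b (ξ k) x) := by
    rw [Finset.sum_comm]
    exact Finset.sum_congr rfl fun a _ => Finset.sum_congr rfl fun b _ => by ring
  have h5 : ∑ a, ∑ b, Γ k b a x * u b x * pd i (ξ a) x
      = ∑ a, ∑ b, u a x * (Γ k a b x * pd i (ξ b) x) := by
    rw [Finset.sum_comm]
    exact Finset.sum_congr rfl fun a _ => Finset.sum_congr rfl fun b _ => by ring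
  have h6 : ∑ a, ∑ b, u a x * (Γ k b i x * pd a (ξ b) x)
      = ∑ a, ∑ b, Γ k a i x * (u b x * pd b (ξ a) x) := by
    rw [Finset.sum_comm]
    exact Finset.sum_congr rfl fun a _ => Finset.sum_congr rfl fun b _ => by ring
  rw [h1, h2, h3, h4, h5, h6]
  ring

lemma lieV_contract {n : ℕ} {ξ u : Fin n → (Fin n → ℝ) → ℝ}
    {A : Fin n → Fin n → (Fin n → ℝ) → ℝ}
    (hξ : ∀ k, Sm (ξ k)) (hu : ∀ k, Sm (u k)) (hA : ∀ k i, Sm (A k i))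
    (k : Fin n) (x : Fin n → ℝ) :
    lieV ξ (fun k y => ∑ i, u i y * A k i y) k x
      = ∑ i, lieV ξ u i x * A k i x + ∑ i, u i x * lieT ξ A k i x := by
  unfold lieV lieT
  have hpd : ∀ j (c : Fin n), pd j (fun y => ∑ i, u i y * A c i y) x
      = ∑ i, (pd j (u i) x * A c i x + u i x * pd j (A c i) x) := by
    intro j c
    rw [pd_sum (fun i => (hu i).mul (hA c i))]
    exact Finset.sum_congr rfl fun i _ => pd_mul (hu i) (hA c i) j x
  simp only [hpd]
  simp only [sub_mul, mul_sub, add_mul, mul_add, Finset.sum_sub_distrib, Finset.sum_add_distrib,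
    Finset.sum_mul, Finset.mul_sum]
  have h1 : ∑ a, ∑ b, ξ a x * (pd a (u b) x * A k b x)
      = ∑ a, ∑ b, ξ b x * pd b (u a) x * A k a x := by
    rw [Finset.sum_comm]
    exact Finset.sum_congr rfl fun a _ => Finset.sum_congr rfl fun b _ => by ring
  have h2 : ∑ a, ∑ b, ξ a x * (u b x * pd a (A k b) x)
      = ∑ a, ∑ b, u a x * (ξ b x * pd b (A k a) x) := by
    rw [Finset.sum_comm]
    exact Finset.sum_congr rfl fun a _ => Finset.sum_congr rfl fun b _ => by ring
  have h3 : ∑ a, ∑ b, u b x * A a b x * pd a (ξ k) x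
      = ∑ a, ∑ b, u a x * (A b a x * pd b (ξ k) x) := by
    rw [Finset.sum_comm]
    exact Finset.sum_congr rfl fun a _ => Finset.sum_congr rfl fun b _ => by ring
  have h4 : ∑ a, ∑ b, u b x * pd b (ξ a) x * A k a x
      = ∑ a, ∑ b, u a x * (A k b x * pd a (ξ b) x) := by
    rw [Finset.sum_comm]
    exact Finset.sum_congr rfl fun a _ => Finset.sum_congr rfl fun b _ => by ring
  rw [h1, h2, h3, h4]
  ring


/-- deviation equation under the condition `(£_ξ F)^k = −F^k`,
where `F^k := u^i u^k_{|i}`: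
`u^j (u^i ξ^k_{|i})_{|j} = R^k_{ijl} u^i u^j ξ^l + ξ^k_{|j} F^j − F^k
  + u^n (w^k)_{|n} − T^k_{jl} F^j ξ^l − u^n ((£_ξ u)^k)_{|n} − u^k_{|i} (£_ξ u)^i`,
where `w^k := T^k_{jl} u^j ξ^l`. -/
theorem deviation_lieF_eq_neg_F {n : ℕ} (hn : 0 < n)
    (Γ : Fin n → Fin n → Fin n → (Fin n → ℝ) → ℝ)
    (u ξ : Fin n → (Fin n → ℝ) → ℝ)
    (hΓ : ∀ k i j, ContDiff ℝ (⊤ : ℕ∞) (Γ k i j))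
    (hu : ∀ k, ContDiff ℝ (⊤ : ℕ∞) (u k))
    (hξ : ∀ k, ContDiff ℝ (⊤ : ℕ∞) (ξ k))
    (hF : ∀ (x : Fin n → ℝ) (k : Fin n),
      lieV ξ (fun k y => ∑ i, u i y * covV Γ u k i y) k x
        = -(∑ i, u i x * covV Γ u k i x)) :
    ∀ (x : Fin n → ℝ) (k : Fin n),
      (∑ j, u j x * covV Γ (fun k y => ∑ i, u i y * covV Γ ξ k i y) k j x) =
        (∑ i, ∑ j, ∑ l, curv Γ k i j l x * u i x * u j x * ξ l x)
          + (∑ j, covV Γ ξ k j x * (∑ i, u i x * covV Γ u j i x))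
          - (∑ i, u i x * covV Γ u k i x)
          + (∑ m, u m x * covV Γ
              (fun k y => ∑ j, ∑ l, tor Γ k j l y * u j y * ξ l y) k m x)
          - (∑ j, ∑ l, tor Γ k j l x * (∑ i, u i x * covV Γ u j i x) * ξ l x)
          - (∑ m, u m x * covV Γ (lieV ξ u) k m x)
          - (∑ i, covV Γ u k i x * lieV ξ u i x) := by
  intro x k
  have hΓ' : ∀ k i j, Sm (Γ k i j) := fun k i j => (hΓ k i j).of_le (by simp)
  have hu' : ∀ k, Sm (u k) := fun k => (hu k).of_le (by simp)
  have hξ' : ∀ k, Sm (ξ k) := fun k => (hξ k).of_le (by simp)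
  have hcovξ : ∀ a b, Sm (fun y => covV Γ ξ a b y) := fun a b => sm_covV hΓ' hξ' a b
  have hcovu : ∀ a b, Sm (fun y => covV Γ u a b y) := fun a b => sm_covV hΓ' hu' a b
  have hs : ∀ a b, Sm (fun y => ∑ l, tor Γ a b l y * ξ l y) :=
    fun a b => sm_sum fun l => (sm_tor hΓ' a b l).mul (hξ' l)
  -- Step 1: Leibniz on the LHS
  have e1 : ∀ j, covV Γ (fun k y => ∑ i, u i y * covV Γ ξ k i y) k j x
      = ∑ i, covV Γ u i j x * covV Γ ξ k i x
        + ∑ i, u i x * covT Γ (fun a b y => covV Γ ξ a b y) k i j x :=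
    fun j => covV_contract hΓ' hu' hcovξ k j x
  -- Step 2: Ricci identity
  have e2 : ∀ i j, covT Γ (fun a b y => covV Γ ξ a b y) k i j x
      = lieC ξ Γ k i j x + ∑ l, curv Γ k i j l x * ξ l x
        + covT Γ (fun a b y => ∑ l, tor Γ a b l y * ξ l y) k i j x :=
    fun i j => covT_covV_xi hΓ' hξ' k i j x
  -- Step 3: rewrite the w-term as a contraction and apply Leibniz
  have hwfun : (fun k y => ∑ j, ∑ l, tor Γ k j l y * u j y * ξ l y)
      = (fun k y => ∑ i, u i y * ∑ l, tor Γ k i l y * ξ l y) := by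
    funext a y
    refine Finset.sum_congr rfl fun i _ => ?_
    rw [Finset.mul_sum]
    exact Finset.sum_congr rfl fun l _ => by ring
  have e3 : ∀ j, covV Γ (fun k y => ∑ i, u i y * ∑ l, tor Γ k i l y * ξ l y) k j x
      = ∑ i, covV Γ u i j x * (∑ l, tor Γ k i l x * ξ l x)
        + ∑ i, u i x * covT Γ (fun a b y => ∑ l, tor Γ a b l y * ξ l y) k i j x :=
    fun j => covV_contract hΓ' hu' hs k j x
  -- Step 4: Lie derivative of F
  have e4 : lieV ξ (fun k y => ∑ i, u i y * covV Γ u k i y) k x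
      = ∑ i, lieV ξ u i x * covV Γ u k i x
        + ∑ i, u i x * lieT ξ (fun a b y => covV Γ u a b y) k i x :=
    lieV_contract hξ' hu' hcovu k x
  have e5 : ∀ i, lieT ξ (fun a b y => covV Γ u a b y) k i x
      = covV Γ (lieV ξ u) k i x + ∑ m, u m x * lieC ξ Γ k m i x :=
    fun i => lieT_covV hΓ' hξ' hu' k i x
  have e6 := hF x k
  rw [e4] at e6
  simp only [e5] at e6
  simp only [e1, hwfun, e3, e2]
  simp only [mul_add, add_mul, mul_sub, sub_mul, Finset.mul_sum, Finset.sum_mul,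
    Finset.sum_add_distrib, Finset.sum_sub_distrib] at e6 ⊢
  have h1 : ∑ a, ∑ b, u a x * (covV Γ u b a x * covV Γ ξ k b x)
      = ∑ a, ∑ b, covV Γ ξ k a x * (u b x * covV Γ u a b x) := by
    rw [Finset.sum_comm]
    exact Finset.sum_congr rfl fun a _ => Finset.sum_congr rfl fun b _ => by ring
  have h2 : ∑ a, ∑ b, ∑ c, u a x * (u b x * (curv Γ k b a c x * ξ c x))
      = ∑ a, ∑ b, ∑ c, curv Γ k a b c x * u a x * u b x * ξ c x := by
    rw [Finset.sum_comm]
    exact Finset.sum_congr rfl fun a _ => Finset.sum_congr rfl fun b _ =>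
      Finset.sum_congr rfl fun c _ => by ring
  have h3 : ∑ a, ∑ b, ∑ c, u a x * (covV Γ u b a x * (tor Γ k b c x * ξ c x))
      = ∑ a, ∑ b, ∑ c, tor Γ k a b x * (u c x * covV Γ u a c x) * ξ b x := by
    rw [Finset.sum_comm]
    refine Eq.trans (Finset.sum_congr rfl fun b _ => Finset.sum_comm) ?_
    exact Finset.sum_congr rfl fun a _ => Finset.sum_congr rfl fun b _ =>
      Finset.sum_congr rfl fun c _ => by ring
  have h4 : ∑ i, covV Γ u k i x * lieV ξ u i x = ∑ i, lieV ξ u i x * covV Γ u k i x :=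
    Finset.sum_congr rfl fun i _ => by ring
  rw [h1, h2, h3, h4]
  linear_combination e6
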